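/- Ball-Box controllability implies zero entropy (abstract form): let (M,d) be a compact metric space with path families P(x,r) satisfying the uniform Lipschitz bound d(γ(t),γ(s)) ≤ K·r·|t−s| for γ∈P(x,r), the concatenation property from the pursuit bound lemma, and the controllability property: there exist n∈ℕ and ρ₀>0 such that for all 0<ρ<ρ₀, any x,y with d(x,y) < ρⁿ can be joined by a path in P(x,ρ) ending at y. Then for each ε>0 the numbers N(d_r,ε) are bounded uniformly in r, and hence the entropy h = lim_{ε→0+} limsup_{r→∞} (log N(d_r,ε))/r is zero. -/

import Mathlib

open Set Filter

noncomputable def supDist {M : Type*} [MetricSpace M] (γ μ : ℝ → M) : ℝ :=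
  sSup ((fun t => dist (γ t) (μ t)) '' Icc (0:ℝ) 1)

noncomputable def pdelta {M : Type*} [MetricSpace M] (P : M → ℝ → Set (ℝ → M))
    (r : ℝ) (x y : M) : ℝ :=
  sSup ((fun γ => sInf ((fun μ => supDist γ μ) '' P y r)) '' P x r)

noncomputable def pdist {M : Type*} [MetricSpace M] (P : M → ℝ → Set (ℝ → M))
    (r : ℝ) (x y : M) : ℝ :=
  pdelta P r x y + pdelta P r y x

def IsSep {X : Type*} (ρ : X → X → ℝ) (ε : ℝ) (S : Set X) : Prop :=
  ∀ x ∈ S, ∀ y ∈ S, x ≠ y → ε ≤ ρ x y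

noncomputable def sepNum {X : Type*} (ρ : X → X → ℝ) (ε : ℝ) : ℕ∞ :=
  ⨆ S : {S : Set X // S.Finite ∧ IsSep ρ ε S}, (S.1.ncard : ℕ∞)

noncomputable def entExpr {X : Type*} (dfam : ℝ → X → X → ℝ) (ε : ℝ) : ℝ :=
  limsup (fun r : ℝ => Real.log ((sepNum (dfam r) ε).toNat) / r) atTop

/-!
Fix `ε > 0` and a speed `ρ < ρ₀` with `K ρ ≤ ε / 8`. Two points at `d`-distance less than
`δ = min (ρ ^ n) (ε / 4)` are `d_r`-close for every `r`: for `r ≤ ρ` every path of speed `r`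
stays within `K r` of its starting point, so `d_r(x, y) ≤ 2 d(x, y) + 4 K r`; for `r > ρ`
controllability joins them by a path of speed `ρ` and the pursuit bound gives
`d_r(x, y) ≤ 2 K ρ`. Hence every `ε`-separated set for `d_r` is `δ`-separated for `d`, and its
size is bounded, independently of `r`, by the number of `δ / 2`-balls needed to cover the
compact space `M`. Bounded separation numbers make `log N(d_r, ε) / r` tend to `0`.
-/

section SeparatedSets

variable {X : Type*}

lemma IsSep.of_lt_imp_lt {ρ σ : X → X → ℝ} {δ ε : ℝ} {S : Set X}
    (h : ∀ x y, ρ x y < δ → σ x y < ε) (hS : IsSep σ ε S) : IsSep ρ δ S :=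
  fun x hx y hy hxy => not_lt.mp fun hlt => (hS x hx y hy hxy).not_gt (h x y hlt)

lemma sepNum_le_of_forall_ncard_le {ρ : X → X → ℝ} {ε : ℝ} {B : ℕ}
    (h : ∀ S : Set X, IsSep ρ ε S → S.ncard ≤ B) : sepNum ρ ε ≤ B :=
  iSup_le fun S => Nat.cast_le.mpr (h S.1 S.2.2)

lemma exists_forall_isSep_dist_ncard_le {M : Type*} [MetricSpace M] [CompactSpace M]
    {δ : ℝ} (hδ : 0 < δ) : ∃ B : ℕ, ∀ S : Set M, IsSep dist δ S → S.ncard ≤ B := by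
  obtain ⟨t, -, ht, hcover⟩ :=
    finite_cover_balls_of_compact (isCompact_univ (X := M)) (half_pos hδ)
  have hcenter : ∀ x : M, ∃ c ∈ t, dist x c < δ / 2 := by
    simpa using fun x => hcover (mem_univ x)
  choose c hct hc using hcenter
  refine ⟨t.ncard, fun S hS => ncard_le_ncard_of_injOn c (fun x _ => hct x) ?_ ht⟩
  intro x hx y hy hxy
  by_contra hne
  have := dist_triangle_right x y (c x)
  linarith [hS x hx y hy hne, hc x, hc y, hxy ▸ hc y]

lemma entExpr_eq_zero_of_sepNum_le {dfam : ℝ → X → X → ℝ} {ε : ℝ} {B : ℕ}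
    (hB : ∀ r > (0:ℝ), sepNum (dfam r) ε ≤ B) : entExpr dfam ε = 0 := by
  have hlog : ∀ r > (0:ℝ), Real.log (sepNum (dfam r) ε).toNat ≤ Real.log B := by
    intro r hr
    have hN : (sepNum (dfam r) ε).toNat ≤ B := ENat.toNat_le_of_le_natCast (hB r hr)
    rcases Nat.eq_zero_or_pos (sepNum (dfam r) ε).toNat with h0 | hpos
    · simpa [h0] using Real.log_natCast_nonneg B
    · exact Real.log_le_log (by exact_mod_cast hpos) (by exact_mod_cast hN)
  refine Tendsto.limsup_eq (tendsto_of_tendsto_of_tendsto_of_le_of_le' tendsto_const_nhds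
    (tendsto_const_nhds.div_atTop tendsto_id : Tendsto (fun r => Real.log B / r) atTop _) ?_ ?_)
  · filter_upwards [eventually_gt_atTop 0] with r hr
    exact div_nonneg (Real.log_natCast_nonneg _) hr.le
  · filter_upwards [eventually_gt_atTop 0] with r hr
    exact div_le_div_of_nonneg_right (hlog r hr) hr.le

end SeparatedSets

section PathDistance

variable {M : Type*} [MetricSpace M]

lemma supDist_nonneg (γ μ : ℝ → M) : 0 ≤ supDist γ μ :=
  Real.sSup_nonneg (by rintro a ⟨t, -, rfl⟩; exact dist_nonneg)

lemma supDist_le {γ μ : ℝ → M} {C : ℝ} (hC : 0 ≤ C)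
    (h : ∀ t ∈ Icc (0:ℝ) 1, dist (γ t) (μ t) ≤ C) : supDist γ μ ≤ C :=
  Real.sSup_le (by rintro a ⟨t, ht, rfl⟩; exact h t ht) hC

lemma pdelta_le {P : M → ℝ → Set (ℝ → M)} {r : ℝ} {x y : M} {C : ℝ} (hC : 0 ≤ C)
    (h : ∀ γ ∈ P x r, ∃ μ ∈ P y r, supDist γ μ ≤ C) : pdelta P r x y ≤ C := by
  refine Real.sSup_le ?_ hC
  rintro a ⟨γ, hγ, rfl⟩
  obtain ⟨μ, hμ, hb⟩ := h γ hγ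
  have hbdd : BddBelow ((fun μ => supDist γ μ) '' P y r) := by
    refine ⟨0, ?_⟩
    rintro b ⟨ν, -, rfl⟩
    exact supDist_nonneg _ _
  exact (csInf_le hbdd ⟨μ, hμ, rfl⟩).trans hb

lemma dist_le_of_lipschitz_on_unitInterval {γ : ℝ → M} {K r : ℝ}
    (hγ : ∀ t ∈ Icc (0:ℝ) 1, ∀ s ∈ Icc (0:ℝ) 1, dist (γ t) (γ s) ≤ K * r * |t - s|)
    {s : ℝ} (hs : s ∈ Icc (0:ℝ) 1) : dist (γ s) (γ 0) ≤ K * r := by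
  have h0 : (0:ℝ) ∈ Icc (0:ℝ) 1 := left_mem_Icc.mpr zero_le_one
  have hKr : 0 ≤ K * r := by
    simpa using dist_nonneg.trans (hγ 1 (right_mem_Icc.mpr zero_le_one) 0 h0)
  calc dist (γ s) (γ 0) ≤ K * r * |s - 0| := hγ s hs 0 h0
    _ ≤ K * r * 1 := by
        gcongr
        rw [sub_zero, abs_of_nonneg hs.1]
        exact hs.2
    _ = K * r := mul_one _

variable {P : M → ℝ → Set (ℝ → M)} {K r : ℝ}

lemma pdelta_le_dist_add (hK : 0 ≤ K) (hr : 0 < r)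
    (hstart : ∀ z r, ∀ γ ∈ P z r, γ 0 = z) (hne : ∀ z r, 0 < r → (P z r).Nonempty)
    (hLip : ∀ z r, ∀ γ ∈ P z r, ∀ t ∈ Icc (0:ℝ) 1, ∀ s ∈ Icc (0:ℝ) 1,
      dist (γ t) (γ s) ≤ K * r * |t - s|) (x y : M) :
    pdelta P r x y ≤ dist x y + 2 * K * r := by
  refine pdelta_le (by positivity) fun γ hγ => ?_
  obtain ⟨μ, hμ⟩ := hne y r hr
  refine ⟨μ, hμ, supDist_le (by positivity) fun s hs => ?_⟩
  have hγs := dist_le_of_lipschitz_on_unitInterval (hLip x r γ hγ) hs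
  have hμs := dist_le_of_lipschitz_on_unitInterval (hLip y r μ hμ) hs
  rw [hstart x r γ hγ] at hγs
  rw [hstart y r μ hμ, dist_comm] at hμs
  linarith [dist_triangle4 (γ s) x y (μ s)]

lemma pdist_le_two_mul_dist_add (hK : 0 ≤ K) (hr : 0 < r)
    (hstart : ∀ z r, ∀ γ ∈ P z r, γ 0 = z) (hne : ∀ z r, 0 < r → (P z r).Nonempty)
    (hLip : ∀ z r, ∀ γ ∈ P z r, ∀ t ∈ Icc (0:ℝ) 1, ∀ s ∈ Icc (0:ℝ) 1,
      dist (γ t) (γ s) ≤ K * r * |t - s|) (x y : M) :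
    pdist P r x y ≤ 2 * dist x y + 4 * K * r := by
  have hxy := pdelta_le_dist_add hK hr hstart hne hLip x y
  have hyx := pdelta_le_dist_add hK hr hstart hne hLip y x
  rw [dist_comm] at hyx
  rw [pdist]
  linarith

lemma exists_pos_forall_dist_lt_pdist_lt (hK : 0 < K)
    (hstart : ∀ z r, ∀ γ ∈ P z r, γ 0 = z) (hne : ∀ z r, 0 < r → (P z r).Nonempty)
    (hLip : ∀ z r, ∀ γ ∈ P z r, ∀ t ∈ Icc (0:ℝ) 1, ∀ s ∈ Icc (0:ℝ) 1,
      dist (γ t) (γ s) ≤ K * r * |t - s|)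
    (hpursuit : ∀ ρ > (0:ℝ), ∀ x y : M,
      (∃ η ∈ P y ρ, η 0 = y ∧ η 1 = x) → ∀ r > ρ, pdist P r x y ≤ 2 * K * ρ)
    (hctrl : ∃ n : ℕ, ∃ ρ₀ > (0:ℝ), ∀ ρ : ℝ, 0 < ρ → ρ < ρ₀ → ∀ x y : M,
      dist x y < ρ ^ n → ∃ η ∈ P x ρ, η 0 = x ∧ η 1 = y)
    {ε : ℝ} (hε : 0 < ε) :
    ∃ δ > (0:ℝ), ∀ r > (0:ℝ), ∀ x y : M, dist x y < δ → pdist P r x y < ε := by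
  obtain ⟨n, ρ₀, hρ₀, hc⟩ := hctrl
  set ρ := min (ρ₀ / 2) (ε / (8 * K))
  have hρ : 0 < ρ := lt_min (half_pos hρ₀) (by positivity)
  have hρρ₀ : ρ < ρ₀ := (min_le_left _ _).trans_lt (half_lt_self hρ₀)
  have hKρ : K * ρ ≤ ε / 8 := by
    calc K * ρ ≤ K * (ε / (8 * K)) := mul_le_mul_of_nonneg_left (min_le_right _ _) hK.le
      _ = ε / 8 := by field_simp
  refine ⟨min (ρ ^ n) (ε / 4), lt_min (pow_pos hρ n) (by positivity), ?_⟩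
  intro r hr x y hxy
  rcases le_or_gt r ρ with hrρ | hρr
  · have hd : dist x y < ε / 4 := hxy.trans_le (min_le_right _ _)
    have hKr : K * r ≤ K * ρ := mul_le_mul_of_nonneg_left hrρ hK.le
    linarith [pdist_le_two_mul_dist_add hK.le hr hstart hne hLip x y]
  · have hd : dist y x < ρ ^ n := (dist_comm y x).trans_lt (hxy.trans_le (min_le_left _ _))
    linarith [hpursuit ρ hρ x y (hc ρ hρ hρρ₀ y x hd) r hρr]

end PathDistance

theorem stmt19 {M : Type*} [MetricSpace M] [CompactSpace M]
    (P : M → ℝ → Set (ℝ → M)) (K : ℝ) (hK : 0 < K)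
    (hstart : ∀ z r, ∀ γ ∈ P z r, γ 0 = z)
    (hne : ∀ z r, 0 < r → (P z r).Nonempty)
    -- (i) uniform Lipschitz bound on paths of speed at most r
    (hLip : ∀ z r, ∀ γ ∈ P z r, ∀ t ∈ Icc (0:ℝ) 1, ∀ s ∈ Icc (0:ℝ) 1,
      dist (γ t) (γ s) ≤ K * r * |t - s|)
    -- (ii) pursuit bound coming from closure under concatenation
    (hpursuit : ∀ ρ > (0:ℝ), ∀ x y : M,
      (∃ η ∈ P y ρ, η 0 = y ∧ η 1 = x) → ∀ r > ρ, pdist P r x y ≤ 2 * K * ρ)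
    -- (iii) controllability from the Ball-Box theorem
    (hctrl : ∃ n : ℕ, ∃ ρ₀ > (0:ℝ), ∀ ρ : ℝ, 0 < ρ → ρ < ρ₀ → ∀ x y : M,
      dist x y < ρ ^ n → ∃ η ∈ P x ρ, η 0 = x ∧ η 1 = y) :
    (∀ ε > (0:ℝ), ∃ B : ℕ, ∀ r > (0:ℝ), sepNum (pdist P r) ε ≤ (B : ℕ∞)) ∧
    Tendsto (entExpr (pdist P)) (nhdsWithin 0 (Ioi 0)) (nhds 0) := by
  have hbounded : ∀ ε > (0:ℝ), ∃ B : ℕ, ∀ r > (0:ℝ), sepNum (pdist P r) ε ≤ (B : ℕ∞) := by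
    intro ε hε
    obtain ⟨δ, hδ, hclose⟩ :=
      exists_pos_forall_dist_lt_pdist_lt hK hstart hne hLip hpursuit hctrl hε
    obtain ⟨B, hB⟩ := exists_forall_isSep_dist_ncard_le (M := M) hδ
    exact ⟨B, fun r hr => sepNum_le_of_forall_ncard_le fun S hS =>
      hB S (hS.of_lt_imp_lt (hclose r hr))⟩
  refine ⟨hbounded, tendsto_const_nhds.congr' ?_⟩
  filter_upwards [self_mem_nhdsWithin] with ε hε
  obtain ⟨B, hB⟩ := hbounded ε hε
  exact (entExpr_eq_zero_of_sepNum_le hB).symm
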